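/- For n ≥ 2 there exist positive constants C₃ and C₄, depending only on n, a₀ and a₁, such that for every δ ∈ (0, 1) and all X, Y ∈ ℝⁿ: |A(|X|) − A(|Y|)| ≤ (C₃/δ^{a₁(1+a₁)})·A(|X − Y|) + C₄·δ^{a₀+1}·(A(|X|) + A(|Y|)). -/

import Mathlib

/-!
The lower bound on `t a'(t) / a(t)` makes `a` nondecreasing; the upper bound makes
`a(t) / t ^ a₁` nonincreasing, i.e. `θ ^ a₁ a(u) ≤ a(θu)` for `θ ∈ [0, 1]`. Integrating this
scaling inequality gives `x a(x) ≤ (1 + a₁) A(x)` and `θ ^ (1 + a₁) A(x) ≤ A(θx)`.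
For `|Y| ≤ |X| = x` and `θ = min 1 (|X - Y| / x)`, monotonicity of `a` then gives
`A(x) - A(|Y|) ≤ a(x) θx ≤ (1 + a₁) θ A(x)`, and the elementary inequality
`θ ≤ δ ^ (a₀ + 1) + θ ^ (1 + a₁) / δ ^ (a₁ (1 + a₁))` (split at `θ = δ ^ (a₀ + 1) ≥ δ ^ (1 + a₁)`)
distributes this bound between the two terms, with `C₃ = C₄ = 1 + a₁`.
-/

open Real MeasureTheory Set intervalIntegral

theorem le_rpow_add_rpow_div {δ θ p q : ℝ} (hδ₀ : 0 < δ) (hδ₁ : δ ≤ 1) (hp : 0 ≤ p)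
    (hqp : q ≤ p) (hθ : 0 ≤ θ) : θ ≤ δ ^ (q + 1) + θ ^ (1 + p) / δ ^ (p * (1 + p)) := by
  rcases le_or_gt θ (δ ^ (q + 1)) with h | h
  · have : 0 ≤ θ ^ (1 + p) / δ ^ (p * (1 + p)) := by positivity
    linarith
  have hθ' : 0 < θ := (rpow_pos_of_pos hδ₀ _).trans h
  have h₁ : δ ^ (1 + p) ≤ θ :=
    (rpow_le_rpow_of_exponent_ge hδ₀ hδ₁ (by linarith)).trans h.le
  have h₂ : δ ^ (p * (1 + p)) ≤ θ ^ p := by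
    rw [mul_comm, rpow_mul hδ₀.le]
    exact rpow_le_rpow (by positivity) h₁ hp
  have h₃ : θ ≤ θ ^ (1 + p) / δ ^ (p * (1 + p)) := by
    rw [le_div_iff₀ (by positivity), rpow_add hθ', rpow_one]
    exact mul_le_mul_of_nonneg_left h₂ hθ'.le
  linarith [rpow_pos_of_pos hδ₀ (q + 1)]

section GrowthBounds

variable {a : ℝ → ℝ} {p : ℝ}

theorem antitoneOn_div_rpow_of_mul_deriv_le (hd : ∀ t > 0, DifferentiableAt ℝ a t)
    (h : ∀ t > 0, t * deriv a t ≤ p * a t) : AntitoneOn (fun t => a t / t ^ p) (Ioi 0) := by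
  have hderiv : ∀ t ∈ Ioi (0 : ℝ), HasDerivAt (fun t => a t / t ^ p)
      ((deriv a t * t ^ p - a t * (p * t ^ (p - 1))) / (t ^ p) ^ 2) t := fun t ht =>
    (hd t ht).hasDerivAt.div (hasDerivAt_rpow_const (Or.inl ht.ne')) (rpow_pos_of_pos ht p).ne'
  refine antitoneOn_of_hasDerivWithinAt_nonpos (convex_Ioi 0)
    (fun t ht => (hderiv t ht).continuousAt.continuousWithinAt)
    (fun t ht => (hderiv t (interior_subset ht)).hasDerivWithinAt) fun t ht => ?_
  rw [interior_Ioi] at ht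
  have hnum : deriv a t * t ^ p - a t * (p * t ^ (p - 1))
      = t ^ (p - 1) * (t * deriv a t - p * a t) := by
    have ht₀ : t ≠ 0 := ht.ne'
    rw [rpow_sub_one ht₀]
    field_simp
  rw [hnum]
  exact div_nonpos_of_nonpos_of_nonneg
    (mul_nonpos_of_nonneg_of_nonpos (rpow_nonneg ht.le _) (sub_nonpos.2 (h t ht))) (sq_nonneg _)

theorem rpow_mul_le_apply_mul (hanti : AntitoneOn (fun t => a t / t ^ p) (Ioi 0))
    (ha0 : a 0 = 0) (hp : 0 < p) : ∀ θ ∈ Icc (0 : ℝ) 1, ∀ u ≥ 0, θ ^ p * a u ≤ a (θ * u) := by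
  rintro θ ⟨hθ₀, hθ₁⟩ u hu
  rcases hθ₀.eq_or_lt with rfl | hθ
  · simp [zero_rpow hp.ne', ha0]
  rcases hu.eq_or_lt with rfl | hu
  · simp [ha0]
  have h := hanti (mul_pos hθ hu) hu (mul_le_of_le_one_left hu.le hθ₁)
  simp only at h
  rw [mul_rpow hθ.le hu.le, div_le_div_iff₀ (rpow_pos_of_pos hu _) (by positivity)] at h
  refine le_of_mul_le_mul_right ?_ (rpow_pos_of_pos hu p)
  linarith

theorem intervalIntegrable_of_monotoneOn_Ici (hmono : MonotoneOn a (Ici 0)) {u v : ℝ}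
    (hu : 0 ≤ u) (hv : 0 ≤ v) : IntervalIntegrable a volume u v :=
  (hmono.mono fun _ ht => le_trans (le_inf hu hv) ht.1).intervalIntegrable

theorem monotoneOn_integral (hmono : MonotoneOn a (Ici 0)) (ha0 : a 0 = 0) :
    MonotoneOn (fun x => ∫ s in (0 : ℝ)..x, a s) (Ici 0) := fun _ hu _ hv huv =>
  integral_mono_interval le_rfl hu huv
    (ae_restrict_of_forall_mem measurableSet_Ioc fun t ht =>
      show 0 ≤ a t from ha0 ▸ hmono self_mem_Ici ht.1.le ht.1.le)
    (intervalIntegrable_of_monotoneOn_Ici hmono le_rfl hv)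

theorem integral_nonneg_of_monotoneOn (hmono : MonotoneOn a (Ici 0)) (ha0 : a 0 = 0) {x : ℝ}
    (hx : 0 ≤ x) : 0 ≤ ∫ s in (0 : ℝ)..x, a s := by
  simpa using monotoneOn_integral hmono ha0 self_mem_Ici hx hx

theorem integral_sub_integral_le_mul_sub (hmono : MonotoneOn a (Ici 0)) {x y : ℝ}
    (hy : 0 ≤ y) (hyx : y ≤ x) :
    (∫ s in (0 : ℝ)..x, a s) - ∫ s in (0 : ℝ)..y, a s ≤ a x * (x - y) := by
  have hx := hy.trans hyx
  rw [integral_interval_sub_left (intervalIntegrable_of_monotoneOn_Ici hmono le_rfl hx)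
    (intervalIntegrable_of_monotoneOn_Ici hmono le_rfl hy)]
  calc ∫ s in y..x, a s ≤ ∫ _ in y..x, a x :=
        integral_mono_on hyx (intervalIntegrable_of_monotoneOn_Ici hmono hy hx)
          intervalIntegrable_const fun s hs => hmono (hy.trans hs.1) hx hs.2
    _ = a x * (x - y) := by rw [intervalIntegral.integral_const, smul_eq_mul, mul_comm]

theorem mul_le_integral_of_rpow_mul_le (hmono : MonotoneOn a (Ici 0)) (hp : 0 < p)
    (hscale : ∀ θ ∈ Icc (0 : ℝ) 1, ∀ u ≥ 0, θ ^ p * a u ≤ a (θ * u)) {x : ℝ} (hx : 0 ≤ x) :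
    x * a x ≤ (1 + p) * ∫ s in (0 : ℝ)..x, a s := by
  rcases hx.eq_or_lt with rfl | hx
  · simp
  have hsub : ∫ s in (0 : ℝ)..x, a s = x * ∫ θ in (0 : ℝ)..1, a (θ * x) := by
    rw [integral_comp_mul_right _ hx.ne', smul_eq_mul, zero_mul, one_mul,
      mul_inv_cancel_left₀ hx.ne']
  have hcomp : IntervalIntegrable (fun θ => a (θ * x)) volume 0 1 :=
    MonotoneOn.intervalIntegrable fun s hs t ht hst => by
      rw [uIcc_of_le zero_le_one] at hs ht
      exact hmono (mul_nonneg hs.1 hx.le) (mul_nonneg ht.1 hx.le)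
        (mul_le_mul_of_nonneg_right hst hx.le)
  have hpow : ∫ θ in (0 : ℝ)..1, θ ^ p * a x = a x / (1 + p) := by
    rw [intervalIntegral.integral_mul_const, integral_rpow (Or.inl (by linarith)), one_rpow,
      zero_rpow (by linarith), add_comm p]
    ring
  have hle : a x / (1 + p) ≤ ∫ θ in (0 : ℝ)..1, a (θ * x) :=
    hpow ▸ integral_mono_on zero_le_one ((intervalIntegrable_rpow' (by linarith)).mul_const _)
      hcomp fun θ hθ => hscale θ hθ x hx.le
  rw [div_le_iff₀ (by linarith)] at hle
  rw [hsub, ← mul_assoc, mul_comm (1 + p), mul_assoc]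
  exact mul_le_mul_of_nonneg_left (by linarith) hx.le

theorem rpow_mul_integral_le_integral (hmono : MonotoneOn a (Ici 0))
    (hscale : ∀ θ ∈ Icc (0 : ℝ) 1, ∀ u ≥ 0, θ ^ p * a u ≤ a (θ * u)) {θ x : ℝ}
    (hθ : θ ∈ Ioc (0 : ℝ) 1) (hx : 0 ≤ x) :
    θ ^ (1 + p) * ∫ s in (0 : ℝ)..x, a s ≤ ∫ s in (0 : ℝ)..θ * x, a s := by
  have hsub : ∫ s in (0 : ℝ)..θ * x, a s = θ * ∫ u in (0 : ℝ)..x, a (θ * u) := by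
    rw [integral_comp_mul_left _ hθ.1.ne', smul_eq_mul, mul_zero,
      mul_inv_cancel_left₀ hθ.1.ne']
  have hcomp : IntervalIntegrable (fun u => a (θ * u)) volume 0 x :=
    MonotoneOn.intervalIntegrable fun s hs t ht hst => by
      rw [uIcc_of_le hx] at hs ht
      exact hmono (mul_nonneg hθ.1.le hs.1) (mul_nonneg hθ.1.le ht.1)
        (mul_le_mul_of_nonneg_left hst hθ.1.le)
  calc θ ^ (1 + p) * ∫ s in (0 : ℝ)..x, a s = θ * ∫ u in (0 : ℝ)..x, θ ^ p * a u := by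
        rw [intervalIntegral.integral_const_mul, rpow_add hθ.1, rpow_one, mul_assoc]
    _ ≤ θ * ∫ u in (0 : ℝ)..x, a (θ * u) :=
        mul_le_mul_of_nonneg_left (integral_mono_on hx
          ((intervalIntegrable_of_monotoneOn_Ici hmono le_rfl hx).const_mul _) hcomp
          fun u hu => hscale θ (Ioc_subset_Icc_self hθ) u hu.1) hθ.1.le
    _ = ∫ s in (0 : ℝ)..θ * x, a s := hsub.symm

theorem integral_sub_integral_le (hmono : MonotoneOn a (Ici 0)) (ha0 : a 0 = 0) (hp : 0 < p)
    (hscale : ∀ θ ∈ Icc (0 : ℝ) 1, ∀ u ≥ 0, θ ^ p * a u ≤ a (θ * u)) {δ q x y r : ℝ}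
    (hδ₀ : 0 < δ) (hδ₁ : δ ≤ 1) (hqp : q ≤ p) (hy : 0 ≤ y) (hyx : y ≤ x) (hr : x - y ≤ r) :
    (∫ s in (0 : ℝ)..x, a s) - ∫ s in (0 : ℝ)..y, a s ≤
      (1 + p) / δ ^ (p * (1 + p)) * (∫ s in (0 : ℝ)..r, a s)
        + (1 + p) * δ ^ (q + 1) * ∫ s in (0 : ℝ)..x, a s := by
  have hF_nonneg : ∀ t ≥ 0, 0 ≤ ∫ s in (0 : ℝ)..t, a s := fun _ ht =>
    integral_nonneg_of_monotoneOn hmono ha0 ht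
  have hx : 0 ≤ x := hy.trans hyx
  have hr₀ : 0 ≤ r := (sub_nonneg.2 hyx).trans hr
  have hp₁ : 0 < 1 + p := by linarith
  rcases (sub_nonneg.2 hyx).eq_or_lt with hxy | hxy
  · rw [sub_eq_zero.1 hxy.symm, sub_self]
    have := hF_nonneg r hr₀
    have := hF_nonneg y hy
    positivity
  have hx₀ : 0 < x := by linarith
  set θ := min 1 (r / x)
  have hθ : θ ∈ Ioc 0 1 := ⟨lt_min one_pos (div_pos (hxy.trans_le hr) hx₀), min_le_left _ _⟩
  have hθx : θ * x = min x r := by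
    rw [min_mul_of_nonneg _ _ hx, one_mul, div_mul_cancel₀ _ hx₀.ne']
  have hgap : x - y ≤ θ * x := hθx ▸ le_min (by linarith) hr
  have ha_nonneg : 0 ≤ a x := ha0 ▸ hmono self_mem_Ici hx hx
  calc (∫ s in (0 : ℝ)..x, a s) - ∫ s in (0 : ℝ)..y, a s
      ≤ a x * (x - y) := integral_sub_integral_le_mul_sub hmono hy hyx
    _ ≤ θ * (x * a x) := (mul_le_mul_of_nonneg_left hgap ha_nonneg).trans_eq (by ring)
    _ ≤ θ * ((1 + p) * ∫ s in (0 : ℝ)..x, a s) :=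
        mul_le_mul_of_nonneg_left (mul_le_integral_of_rpow_mul_le hmono hp hscale hx) hθ.1.le
    _ ≤ (1 + p) * (∫ s in (0 : ℝ)..x, a s) * (δ ^ (q + 1) + θ ^ (1 + p) / δ ^ (p * (1 + p))) := by
        rw [mul_comm]
        exact mul_le_mul_of_nonneg_left (le_rpow_add_rpow_div hδ₀ hδ₁ hp.le hqp hθ.1.le)
          (mul_nonneg (by linarith) (hF_nonneg x hx))
    _ = (1 + p) / δ ^ (p * (1 + p)) * (θ ^ (1 + p) * ∫ s in (0 : ℝ)..x, a s)
        + (1 + p) * δ ^ (q + 1) * ∫ s in (0 : ℝ)..x, a s := by ring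
    _ ≤ (1 + p) / δ ^ (p * (1 + p)) * (∫ s in (0 : ℝ)..r, a s)
        + (1 + p) * δ ^ (q + 1) * ∫ s in (0 : ℝ)..x, a s := by
        gcongr ?_ * ?_ + _
        exact (rpow_mul_integral_le_integral hmono hscale hθ hx).trans
          (monotoneOn_integral hmono ha0 (mul_nonneg hθ.1.le hx) hr₀ (hθx ▸ min_le_right x r))

theorem abs_integral_sub_integral_le (hmono : MonotoneOn a (Ici 0)) (ha0 : a 0 = 0)
    (hp : 0 < p) (hscale : ∀ θ ∈ Icc (0 : ℝ) 1, ∀ u ≥ 0, θ ^ p * a u ≤ a (θ * u))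
    {δ q x y r : ℝ} (hδ₀ : 0 < δ) (hδ₁ : δ ≤ 1) (hqp : q ≤ p) (hx : 0 ≤ x) (hy : 0 ≤ y)
    (hr : |x - y| ≤ r) :
    |(∫ s in (0 : ℝ)..x, a s) - ∫ s in (0 : ℝ)..y, a s| ≤
      (1 + p) / δ ^ (p * (1 + p)) * (∫ s in (0 : ℝ)..r, a s)
        + (1 + p) * δ ^ (q + 1) * ((∫ s in (0 : ℝ)..x, a s) + ∫ s in (0 : ℝ)..y, a s) := by
  wlog hyx : y ≤ x generalizing x y
  · rw [abs_sub_comm, add_comm (∫ s in (0 : ℝ)..x, a s)]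
    exact this hy hx (abs_sub_comm x y ▸ hr) (le_of_not_ge hyx)
  have hFyx : ∫ s in (0 : ℝ)..y, a s ≤ ∫ s in (0 : ℝ)..x, a s :=
    monotoneOn_integral hmono ha0 hy hx hyx
  rw [abs_of_nonneg (sub_nonneg.2 hFyx)]
  have hy_term : 0 ≤ (1 + p) * δ ^ (q + 1) * ∫ s in (0 : ℝ)..y, a s :=
    mul_nonneg (mul_nonneg (by linarith) (rpow_nonneg hδ₀.le _))
      (integral_nonneg_of_monotoneOn hmono ha0 hy)
  linarith [integral_sub_integral_le hmono ha0 hp hscale hδ₀ hδ₁ hqp hy hyx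
    ((le_abs_self _).trans hr)]

end GrowthBounds

theorem stmt_13_general
    (a : ℝ → ℝ) (a₀ a₁ : ℝ)
    (ha_cont : ContinuousOn a (Set.Ici 0))
    (ha_diff : ∀ t ∈ Set.Ioi (0:ℝ), DifferentiableAt ℝ a t)
    (ha_zero : a 0 = 0)
    (ha_pos : ∀ t > 0, 0 < a t)
    (ha₀_pos : 0 < a₀) (ha₀_lt : a₀ < 1) (ha₁_gt : 1 < a₁)
    (hcond : ∀ t > 0, a₀ ≤ t * deriv a t / a t ∧ t * deriv a t / a t ≤ a₁)
    (A : ℝ → ℝ) (hA : ∀ t, A t = ∫ s in (0:ℝ)..t, a s)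
    (n : ℕ) :
    ∃ C₃ C₄ : ℝ, 0 < C₃ ∧ 0 < C₄ ∧
      ∀ δ ∈ Set.Ioo (0:ℝ) 1, ∀ X Y : EuclideanSpace ℝ (Fin n),
        |A ‖X‖ - A ‖Y‖| ≤ (C₃ / δ ^ (a₁ * (1 + a₁))) * A ‖X - Y‖
          + C₄ * δ ^ (a₀ + 1) * (A ‖X‖ + A ‖Y‖) := by
  obtain rfl : A = fun t => ∫ s in (0:ℝ)..t, a s := funext hA
  have hderiv_nonneg : ∀ t ∈ Ioi (0 : ℝ), 0 ≤ deriv a t := fun t ht =>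
    (pos_of_mul_pos_right ((div_pos_iff_of_pos_right (ha_pos t ht)).1
      (ha₀_pos.trans_le (hcond t ht).1)) ht.le).le
  have hmono : MonotoneOn a (Ici 0) := monotoneOn_of_deriv_nonneg (convex_Ici 0) ha_cont
    (by rw [interior_Ici]; exact fun t ht => (ha_diff t ht).differentiableWithinAt)
    (by rwa [interior_Ici])
  have hscale := rpow_mul_le_apply_mul (antitoneOn_div_rpow_of_mul_deriv_le ha_diff
    fun t ht => (div_le_iff₀ (ha_pos t ht)).1 (hcond t ht).2) ha_zero (by linarith)
  refine ⟨1 + a₁, 1 + a₁, by linarith, by linarith, fun δ hδ X Y => ?_⟩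
  simpa only [mul_div_assoc'] using abs_integral_sub_integral_le hmono ha_zero (by linarith)
    hscale hδ.1 hδ.2.le (by linarith) (norm_nonneg X) (norm_nonneg Y) (abs_norm_sub_norm_le X Y)

/-- Lemma 2.8: there are `C₃, C₄ > 0` (depending only on `n, a₀, a₁`) such that for all
`δ ∈ (0,1)` and `X, Y ∈ ℝⁿ`,
`|A(|X|) - A(|Y|)| ≤ (C₃/δ^{a₁(1+a₁)})·A(|X-Y|) + C₄·δ^{a₀+1}·(A(|X|)+A(|Y|))`. -/
theorem stmt_13
    (a : ℝ → ℝ) (a₀ a₁ : ℝ)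
    (ha_cont : ContinuousOn a (Set.Ici 0))
    (ha_diff : ∀ t ∈ Set.Ioi (0:ℝ), DifferentiableAt ℝ a t)
    (ha_deriv_cont : ContinuousOn (deriv a) (Set.Ioi 0))
    (ha_zero : a 0 = 0)
    (ha_pos : ∀ t > 0, 0 < a t)
    (ha₀_pos : 0 < a₀) (ha₀_lt : a₀ < 1) (ha₁_gt : 1 < a₁)
    (hcond : ∀ t > 0, a₀ ≤ t * deriv a t / a t ∧ t * deriv a t / a t ≤ a₁)
    (A : ℝ → ℝ) (hA : ∀ t, A t = ∫ s in (0:ℝ)..t, a s)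
    (n : ℕ) (hn : 2 ≤ n) :
    ∃ C₃ C₄ : ℝ, 0 < C₃ ∧ 0 < C₄ ∧
      ∀ δ ∈ Set.Ioo (0:ℝ) 1, ∀ X Y : EuclideanSpace ℝ (Fin n),
        |A ‖X‖ - A ‖Y‖| ≤ (C₃ / δ ^ (a₁ * (1 + a₁))) * A ‖X - Y‖
          + C₄ * δ ^ (a₀ + 1) * (A ‖X‖ + A ‖Y‖) :=
  stmt_13_general a a₀ a₁ ha_cont ha_diff ha_zero ha_pos ha₀_pos ha₀_lt ha₁_gt hcond A hA n
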